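/- For every 3-CNF formula φ over the variables p_0,…,p_{n−1} with exactly m clauses (n, m ≥ 1), the pair (s_{n,m}, enc(φ)) belongs to τ_{OI,M_sat} if and only if φ is satisfiable. -/

import Mathlib

namespace MttF

/-- Finite ordered trees over a label type `α`. -/
inductive RTree (α : Type) : Type
  | node : α → List (RTree α) → RTree α

namespace RTree

variable {α β : Type}

/-- The root label of a tree. -/
def label : RTree α → α
  | node a _ => a

/-- The list of immediate subtrees of a tree. -/
def children : RTree α → List (RTree α)
  | node _ ts => ts

/-- Relabelling of trees. -/
def map (f : α → β) : RTree α → RTree β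
  | node a ts => node (f a) (ts.attach.map (fun x => map f x.1))
decreasing_by
  have := List.sizeOf_lt_of_mem x.2
  simp only [node.sizeOf_spec]
  omega

/-- A tree is well-formed with respect to a rank function if every node labeled
by a rank-`k` symbol has exactly `k` children. `T_Σ` is the set of well-formed
trees over `Σ`. -/
inductive Wf (rk : α → ℕ) : RTree α → Prop
  | node {a : α} {ts : List (RTree α)} :
      ts.length = rk a → (∀ t ∈ ts, Wf rk t) → Wf rk (node a ts)

/-- `Subtree u t` holds iff `u` is a subtree of `t` (rooted at some node of `t`). -/
inductive Subtree : RTree α → RTree α → Prop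
  | refl (t : RTree α) : Subtree t t
  | step {u c : RTree α} {a : α} {ts : List (RTree α)} :
      c ∈ ts → Subtree u c → Subtree u (node a ts)

end RTree

/-- Labels for output trees with parameters: trees over `Δ ∪ Y`. -/
inductive OLab (Δ : Type) : Type
  | out (d : Δ)
  | param (i : ℕ)

/-- Labels for right-hand sides of mtt rules: trees over `Δ ∪ (Q × X) ∪ Y`
(the second component of a call is the index of the input variable `x`). -/
inductive RLab (Δ Q : Type) : Type
  | out (d : Δ)
  | call (q : Q) (x : ℕ)
  | param (i : ℕ)

/-- Labels for "semantic" trees over `Δ ∪ (Q × T_Σ) ∪ Y`. -/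
inductive SLab (Γ Δ Q : Type) : Type
  | out (d : Δ)
  | call (q : Q) (s : RTree Γ)
  | param (i : ℕ)

/-- Trees over `Δ ∪ Y`. -/
abbrev OT (Δ : Type) := RTree (OLab Δ)
/-- Right-hand side trees over `Δ ∪ (Q × X) ∪ Y`. -/
abbrev Rhs (Δ Q : Type) := RTree (RLab Δ Q)
/-- Trees over `Δ ∪ (Q × T_Σ) ∪ Y`. -/
abbrev ST (Γ Δ Q : Type) := RTree (SLab Γ Δ Q)

/-- First-order substitution `x_i := ss_i` on a label of a right-hand side
(indices are 0-based; for well-formed rules the index is always in range). -/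
def RLab.subst {Γ Δ Q : Type} (ss : List (RTree Γ)) : RLab Δ Q → SLab Γ Δ Q
  | .out d => .out d
  | .param i => .param i
  | .call q x =>
    match ss[x]? with
    | some s => .call q s
    | none => .param x

/-- `r[x_1/s_1, …, x_k/s_k]`. -/
def substX {Γ Δ Q : Type} (ss : List (RTree Γ)) (r : Rhs Δ Q) : ST Γ Δ Q :=
  r.map (RLab.subst ss)

/-- Second-order (parameter) substitution `t[y_1/ts_1, …, y_n/ts_n]`
(`y` indices are 0-based). -/
def substY {Δ : Type} (ts : List (OT Δ)) : OT Δ → OT Δ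
  | .node (.param i) _ => ts.getD i (.node (.param i) [])
  | .node (.out d) us => .node (.out d) (us.attach.map (fun x => substY ts x.1))
decreasing_by
  have := List.sizeOf_lt_of_mem x.2
  simp only [RTree.node.sizeOf_spec]
  omega

/-- The embedding of `T_Δ` into the trees over `Δ ∪ Y`. -/
def embed {Δ : Type} (t : RTree Δ) : OT Δ := t.map OLab.out

variable {Γ Δ Q : Type}

/-- IO (call-by-value, inside-out) semantics: `SemIO rsel u t` holds iff
`t ∈ ⟦u⟧_IO`.  The rules of the transducer are given by a selector
`rsel q σ ss`: the set of right-hand sides of the `⟨q,σ⟩`-rules that are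
applicable when the children of the current input node are `ss` (for a plain
mtt this does not depend on `ss`, cf. `plainSel`). -/
inductive SemIO (rsel : Q → Γ → List (RTree Γ) → Set (Rhs Δ Q)) :
    ST Γ Δ Q → OT Δ → Prop
  | param (i : ℕ) :
      SemIO rsel (.node (.param i) []) (.node (.param i) [])
  | out {d : Δ} {us : List (ST Γ Δ Q)} {ts : List (OT Δ)}
      (hlen : ts.length = us.length)
      (h : ∀ i : Fin us.length, SemIO rsel (us.get i) (ts.get (i.cast hlen.symm))) :
      SemIO rsel (.node (.out d) us) (.node (.out d) ts)
  | call {q : Q} {σ : Γ} {ss : List (RTree Γ)} {us : List (ST Γ Δ Q)}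
      {r : Rhs Δ Q} {t₀ : OT Δ} {ts : List (OT Δ)}
      (hr : r ∈ rsel q σ ss)
      (h₀ : SemIO rsel (substX ss r) t₀)
      (hlen : ts.length = us.length)
      (h : ∀ i : Fin us.length, SemIO rsel (us.get i) (ts.get (i.cast hlen.symm))) :
      SemIO rsel (.node (.call q (.node σ ss)) us) (substY ts t₀)

mutual
/-- OI (call-by-name, outside-in) semantics: `SemOI rsel u t` holds iff
`t ∈ ⟦u⟧_OI`. -/
inductive SemOI (rsel : Q → Γ → List (RTree Γ) → Set (Rhs Δ Q)) :
    ST Γ Δ Q → OT Δ → Prop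
  | param (i : ℕ) :
      SemOI rsel (.node (.param i) []) (.node (.param i) [])
  | out {d : Δ} {us : List (ST Γ Δ Q)} {ts : List (OT Δ)}
      (hlen : ts.length = us.length)
      (h : ∀ i : Fin us.length, SemOI rsel (us.get i) (ts.get (i.cast hlen.symm))) :
      SemOI rsel (.node (.out d) us) (.node (.out d) ts)
  | call {q : Q} {σ : Γ} {ss : List (RTree Γ)} {us : List (ST Γ Δ Q)}
      {r : Rhs Δ Q} {t₀ : OT Δ} {t : OT Δ}
      (hr : r ∈ rsel q σ ss)
      (h₀ : SemOI rsel (substX ss r) t₀)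
      (hs : OISub rsel us t₀ t) :
      SemOI rsel (.node (.call q (.node σ ss)) us) t

/-- OI-substitution: `OISub rsel us t₀ t` holds iff `t ∈ (t₀ ←_OI (⟦us_1⟧_OI, …, ⟦us_n⟧_OI))`,
i.e. `t` is obtained from `t₀` by independently replacing every occurrence of a parameter
`y_i` by some member of `⟦us_i⟧_OI`. -/
inductive OISub (rsel : Q → Γ → List (RTree Γ) → Set (Rhs Δ Q)) :
    List (ST Γ Δ Q) → OT Δ → OT Δ → Prop
  | param {us : List (ST Γ Δ Q)} {i : ℕ} {t : OT Δ}
      (h : i < us.length) (hsem : SemOI rsel (us.get ⟨i, h⟩) t) :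
      OISub rsel us (.node (.param i) []) t
  | out {us : List (ST Γ Δ Q)} {d : Δ} {ts ts' : List (OT Δ)}
      (hlen : ts'.length = ts.length)
      (h : ∀ i : Fin ts.length, OISub rsel us (ts.get i) (ts'.get (i.cast hlen.symm))) :
      OISub rsel us (.node (.out d) ts) (.node (.out d) ts')
end

/-- The rule selector of a plain mtt: the applicable rules do not depend on the
child subtrees of the current input node. -/
def plainSel (rules : Q → Γ → Set (Rhs Δ Q)) :
    Q → Γ → List (RTree Γ) → Set (Rhs Δ Q) :=
  fun q σ _ => rules q σ

/-- The translation `τ_{IO,M} ⊆ T_Σ × T_Δ` realized in IO mode. -/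
def tauIO (rankΓ : Γ → ℕ) (rankΔ : Δ → ℕ)
    (rsel : Q → Γ → List (RTree Γ) → Set (Rhs Δ Q)) (q₀ : Q) :
    Set (RTree Γ × RTree Δ) :=
  {p | p.1.Wf rankΓ ∧ p.2.Wf rankΔ ∧
       SemIO rsel (.node (.call q₀ p.1) []) (embed p.2)}

/-- The translation `τ_{OI,M} ⊆ T_Σ × T_Δ` realized in OI mode. -/
def tauOI (rankΓ : Γ → ℕ) (rankΔ : Δ → ℕ)
    (rsel : Q → Γ → List (RTree Γ) → Set (Rhs Δ Q)) (q₀ : Q) :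
    Set (RTree Γ × RTree Δ) :=
  {p | p.1.Wf rankΓ ∧ p.2.Wf rankΔ ∧
       SemOI rsel (.node (.call q₀ p.1) []) (embed p.2)}

/-- Well-formedness of a right-hand side of a rule of an mtt whose current
input symbol has rank `k` and whose current state has rank `m`: output symbols
have the correct number of children, state calls `⟨q', x_i⟩` have `rank q'`
children and `i < k`, and parameters `y_j` satisfy `j < m`. -/
inductive RhsWf (rankΔ : Δ → ℕ) (rankQ : Q → ℕ) (k m : ℕ) : Rhs Δ Q → Prop
  | out {d : Δ} {ts : List (Rhs Δ Q)}
      (hlen : ts.length = rankΔ d) (h : ∀ t ∈ ts, RhsWf rankΔ rankQ k m t) :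
      RhsWf rankΔ rankQ k m (.node (.out d) ts)
  | call {q : Q} {x : ℕ} {ts : List (Rhs Δ Q)}
      (hx : x < k) (hlen : ts.length = rankQ q)
      (h : ∀ t ∈ ts, RhsWf rankΔ rankQ k m t) :
      RhsWf rankΔ rankQ k m (.node (.call q x) ts)
  | param {i : ℕ} (hi : i < m) : RhsWf rankΔ rankQ k m (.node (.param i) [])

/-- Well-formedness of a tree over `Δ ∪ (Q × T_Σ) ∪ Y`. -/
inductive STWf (rankΓ : Γ → ℕ) (rankΔ : Δ → ℕ) (rankQ : Q → ℕ) : ST Γ Δ Q → Prop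
  | out {d : Δ} {ts : List (ST Γ Δ Q)}
      (hlen : ts.length = rankΔ d) (h : ∀ t ∈ ts, STWf rankΓ rankΔ rankQ t) :
      STWf rankΓ rankΔ rankQ (.node (.out d) ts)
  | call {q : Q} {s : RTree Γ} {ts : List (ST Γ Δ Q)}
      (hs : s.Wf rankΓ) (hlen : ts.length = rankQ q)
      (h : ∀ t ∈ ts, STWf rankΓ rankΔ rankQ t) :
      STWf rankΓ rankΔ rankQ (.node (.call q s) ts)
  | param (i : ℕ) : STWf rankΓ rankΔ rankQ (.node (.param i) [])

/-- A tree over `Δ ∪ (Q × T_Σ) ∪ Y` is parameter-free if no `y_i` occurs in it. -/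
inductive NoParam : ST Γ Δ Q → Prop
  | node {l : SLab Γ Δ Q} {ts : List (ST Γ Δ Q)}
      (hl : ∀ i : ℕ, l ≠ .param i) (h : ∀ t ∈ ts, NoParam t) :
      NoParam (.node l ts)

/-- A macro tree transducer `M = (Q, Σ, Δ, q₀, R)`.  The alphabets `Γ` (input),
`Δ` (output) and the set `Q` of states are ranked; `q₀` has rank `0`; `rules q σ`
is the (finite) set `R_{q,σ}` of right-hand sides of the `⟨q,σ⟩`-rules, and every
right-hand side is a well-formed tree over `Δ ∪ (Q × X_k) ∪ Y_m`. -/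
structure MTT (Γ Δ Q : Type) where
  rankΓ : Γ → ℕ
  rankΔ : Δ → ℕ
  rankQ : Q → ℕ
  q₀ : Q
  q₀_rank : rankQ q₀ = 0
  rules : Q → Γ → Set (Rhs Δ Q)
  rules_fin : ∀ q σ, (rules q σ).Finite
  rules_wf : ∀ q σ, ∀ r ∈ rules q σ, RhsWf rankΔ rankQ (rankΓ σ) (rankQ q) r

/-- The rule selector of a plain mtt. -/
def MTT.sel (M : MTT Γ Δ Q) : Q → Γ → List (RTree Γ) → Set (Rhs Δ Q) :=
  plainSel M.rules

end MttF
namespace MttF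

/-- Input alphabet of `M_sat`: `a` (rank 1), `b` (rank 3), `c` (rank 1), `d` (rank 0). -/
inductive GS : Type | a | b | c | d

def rkGS : GS → ℕ | .a => 1 | .b => 3 | .c => 1 | .d => 0

/-- Output alphabet of `M_sat`: `∧` (rank 2), `∨` (rank 3), `¬` (rank 1),
`v` (rank 1), `e` (rank 0). -/
inductive DS : Type | and | or | not | v | e

def rkDS : DS → ℕ | .and => 2 | .or => 3 | .not => 1 | .v => 1 | .e => 0

/-- States of `M_sat`: `q0` (rank 0), `q` (rank 3, parameters `y_v, y_t, y_f`),
`qc` (rank 2). -/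
inductive QS : Type | q0 | q | qc

def rkQS : QS → ℕ | .q0 => 0 | .q => 3 | .qc => 2

/-- The parameter `y_i` (`y 0 = y_v`, `y 1 = y_t`, `y 2 = y_f`). -/
def yS (i : ℕ) : Rhs DS QS := .node (.param i) []

def oeS : Rhs DS QS := .node (.out .e) []

/-- Either `y_t` (for `true`) or `y_f` (for `false`). -/
def ytf : Bool → Rhs DS QS
  | true => yS 1
  | false => yS 2

/-- The two `⟨q0,a⟩`-rules: `⟨q0, a(x₁)⟩ → ⟨q, x₁⟩(v(e), e, ¬(e))` and
`⟨q0, a(x₁)⟩ → ⟨q, x₁⟩(v(e), ¬(e), e)`. -/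
def q0Rule : Bool → Rhs DS QS
  | true => .node (.call .q 0) [.node (.out .v) [oeS], oeS, .node (.out .not) [oeS]]
  | false => .node (.call .q 0) [.node (.out .v) [oeS], .node (.out .not) [oeS], oeS]

/-- The two `⟨q,b⟩`-rules:
`⟨q, b(x₁,x₂,x₃)⟩(y_v,y_t,y_f) → ⟨q, x₁⟩(v(y_v), ⟨qc,x₂⟩(y_t, y_v), ⟨qc,x₃⟩(y_f, ¬(y_v)))`
and
`⟨q, b(x₁,x₂,x₃)⟩(y_v,y_t,y_f) → ⟨q, x₁⟩(v(y_v), ⟨qc,x₂⟩(y_t, ¬(y_v)), ⟨qc,x₃⟩(y_f, y_v))`. -/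
def qbRule : Bool → Rhs DS QS
  | true => .node (.call .q 0) [.node (.out .v) [yS 0],
      .node (.call .qc 1) [yS 1, yS 0],
      .node (.call .qc 2) [yS 2, .node (.out .not) [yS 0]]]
  | false => .node (.call .q 0) [.node (.out .v) [yS 0],
      .node (.call .qc 1) [yS 1, .node (.out .not) [yS 0]],
      .node (.call .qc 2) [yS 2, yS 0]]

/-- The `⟨q,c⟩`-rule for a literal choice `(z₁,z₂,z₃) ∈ {y_t,y_f}³`:
`⟨q, c(x₁)⟩(y_v,y_t,y_f) → ∧(∨(z₁,z₂,z₃), ⟨q, x₁⟩(y_v,y_t,y_f))`. -/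
def qcRule (b1 b2 b3 : Bool) : Rhs DS QS :=
  .node (.out .and) [.node (.out .or) [ytf b1, ytf b2, ytf b3],
    .node (.call .q 0) [yS 0, yS 1, yS 2]]

/-- The `⟨q,d⟩`-rule for a literal choice: `⟨q, d⟩(y_v,y_t,y_f) → ∨(z₁,z₂,z₃)`. -/
def qdRule (b1 b2 b3 : Bool) : Rhs DS QS :=
  .node (.out .or) [ytf b1, ytf b2, ytf b3]

/-- The rules of `M_sat`; the `⟨q,c⟩`- and `⟨q,d⟩`-rules range over the seven
triples in `{y_t,y_f}³` other than `(y_f,y_f,y_f)`, and the `⟨qc,d⟩`-rules are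
`⟨qc, d⟩(y₁,y₂) → y₁` and `⟨qc, d⟩(y₁,y₂) → y₂`. -/
def rulesSat : QS → GS → Set (Rhs DS QS)
  | .q0, .a => {r | ∃ pos : Bool, r = q0Rule pos}
  | .q, .b => {r | ∃ pos : Bool, r = qbRule pos}
  | .qc, .d => {.node (.param 0) [], .node (.param 1) []}
  | .q, .c => {r | ∃ b1 b2 b3 : Bool, (b1 || b2 || b3) = true ∧ r = qcRule b1 b2 b3}
  | .q, .d => {r | ∃ b1 b2 b3 : Bool, (b1 || b2 || b3) = true ∧ r = qdRule b1 b2 b3}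
  | _, _ => ∅

/-- A literal: `(true, i)` is `p_i` and `(false, i)` is `¬ p_i`. -/
abbrev Lit := Bool × ℕ
/-- A clause: a disjunction of exactly three literals. -/
abbrev Clause := Lit × Lit × Lit
/-- A 3-CNF formula: a (nonempty) list of clauses `C_1 ∧ ⋯ ∧ C_m`. -/
abbrev CNF := List Clause

/-- `φ` is a 3-CNF formula over the variables `p_0, …, p_{n−1}` with exactly
`m` clauses. -/
def goodCNF (n m : ℕ) (φ : CNF) : Prop :=
  φ.length = m ∧ ∀ cl ∈ φ, cl.1.2 < n ∧ cl.2.1.2 < n ∧ cl.2.2.2 < n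

/-- A literal is true under an assignment `α`. -/
def evalLit (α : ℕ → Bool) (l : Lit) : Prop := α l.2 = l.1

/-- Satisfiability of a 3-CNF formula. -/
def Satisfiable (φ : CNF) : Prop :=
  ∃ α : ℕ → Bool, ∀ cl ∈ φ, evalLit α cl.1 ∨ evalLit α cl.2.1 ∨ evalLit α cl.2.2

/-- The encoding `v^i(e)` of the variable `p_i`. -/
def varE : ℕ → RTree DS
  | 0 => .node .e []
  | i+1 => .node .v [varE i]

/-- The encoding of a literal. -/
def litE : Lit → RTree DS
  | (true, i) => varE i
  | (false, i) => .node .not [varE i]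

/-- The encoding `∨(enc l₁, enc l₂, enc l₃)` of a clause. -/
def clauseE : Clause → RTree DS
  | (l1, l2, l3) => .node .or [litE l1, litE l2, litE l3]

/-- The (right-nested) encoding of a 3-CNF formula. -/
def encF : CNF → RTree DS
  | [] => .node .e []
  | [cl] => clauseE cl
  | cl :: cls => .node .and [clauseE cl, encF cls]

/-- `c^k(d)`. -/
def cIter : ℕ → RTree GS
  | 0 => .node .d []
  | k+1 => .node .c [cIter k]

/-- `t_{i+1} = b(t_i, d, d)`. -/
def bIter : ℕ → RTree GS → RTree GS
  | 0, t => t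
  | k+1, t => .node .b [bIter k t, .node .d [], .node .d []]

/-- The input tree `s_{n,m} = a(t_{n−1})` with `t_0 = c^{m−1}(d)` and
`t_{i+1} = b(t_i, d, d)`. -/
def sNM (n m : ℕ) : RTree GS := .node .a [bIter (n-1) (cIter (m-1))]

/-!
In OI mode the arguments of a call are passed unevaluated into the right-hand side
(`semOI_call_iff_substParams`), so each occurrence of a parameter independently picks one of its
values. Along the `b`-spine of `s_{n,m}` the parameter `y_v` of `q` denotes the single tree
`v^i(e)`, while the rule applied at the `i`-th `b`-node fixes a polarity of `p_i` once for the
whole subtree and, through the two `q_c`-rules, adds the literal it makes true to the values of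
`y_t` and the opposite literal to those of `y_f`. Below the spine, `y_t` and `y_f` therefore
denote the literals that are true, resp. false, under one assignment `γ` (`semOI_q_bIter`).
Every `c`-node and the final `d` emit a clause whose literals are values of `y_t` or `y_f`, at
least one of `y_t`; so `enc(φ)` is an output iff some `γ` satisfies every clause of `φ`.
-/

namespace RTree

variable {α β : Type}

@[induction_eliminator]
theorem induction {motive : RTree α → Prop}
    (node : ∀ a ts, (∀ t ∈ ts, motive t) → motive (RTree.node a ts)) : ∀ t, motive t
  | .node a ts => node a ts fun t ht =>
      have := List.sizeOf_lt_of_mem ht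
      induction node t
decreasing_by simp only [RTree.node.sizeOf_spec]; omega

@[simp]
theorem map_node (f : α → β) (a : α) (ts : List (RTree α)) :
    (node a ts).map f = node (f a) (ts.map (map f)) := by
  rw [map]; simp

@[simp]
theorem wf_node_iff {rk : α → ℕ} {a : α} {ts : List (RTree α)} :
    (node a ts).Wf rk ↔ ts.length = rk a ∧ ∀ t ∈ ts, t.Wf rk :=
  ⟨fun ⟨hl, h⟩ => ⟨hl, h⟩, fun ⟨hl, h⟩ => ⟨hl, h⟩⟩

end RTree

theorem _root_.List.forall₂_congr_left {α β : Type*} {R S : α → β → Prop} {l₁ : List α}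
    (h : ∀ a ∈ l₁, ∀ b, R a b ↔ S a b) {l₂ : List β} :
    List.Forall₂ R l₁ l₂ ↔ List.Forall₂ S l₁ l₂ := by
  induction l₁ generalizing l₂ with
  | nil => simp
  | cons a l ih =>
    simp only [List.forall₂_cons_left_iff, List.forall_mem_cons] at h ⊢
    simp only [h.1, ih h.2]

theorem _root_.List.forall₂_comp_iff {α β γ : Type*} {R : α → β → Prop} {S : β → γ → Prop}
    {l₁ : List α} {l₃ : List γ} :
    List.Forall₂ (Relation.Comp R S) l₁ l₃ ↔
      ∃ l₂, List.Forall₂ R l₁ l₂ ∧ List.Forall₂ S l₂ l₃ := by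
  induction l₁ generalizing l₃ with
  | nil => simp
  | cons a l ih =>
    simp only [List.forall₂_cons_left_iff, ih, Relation.Comp]
    constructor
    · rintro ⟨c, l₃, ⟨b, hab, hbc⟩, ⟨l₂, hl, hl'⟩, rfl⟩
      exact ⟨b :: l₂, ⟨b, l₂, hab, hl, rfl⟩, .cons hbc hl'⟩
    · rintro ⟨_, ⟨b, l₂, hab, hl, rfl⟩, hbl⟩
      obtain ⟨c, l₃, hbc, hl', rfl⟩ := List.forall₂_cons_left_iff.1 hbl
      exact ⟨c, l₃, ⟨b, hab, hbc⟩, ⟨l₂, hl, hl'⟩, rfl⟩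

section OISemantics

variable {Γ Δ Q : Type} {rsel : Q → Γ → List (RTree Γ) → Set (Rhs Δ Q)}

theorem semOI_param_iff {i : ℕ} {t : OT Δ} :
    SemOI rsel (.node (.param i) []) t ↔ t = .node (.param i) [] :=
  ⟨fun h => by cases h; rfl, fun h => h ▸ .param i⟩

theorem semOI_out_iff {d : Δ} {us : List (ST Γ Δ Q)} {t : OT Δ} :
    SemOI rsel (.node (.out d) us) t ↔
      ∃ ts, List.Forall₂ (SemOI rsel) us ts ∧ t = .node (.out d) ts := by
  constructor
  · intro h
    cases h with
    | out hlen h => exact ⟨_, List.forall₂_iff_get.2 ⟨hlen.symm, fun i _ _ => h ⟨i, _⟩⟩, rfl⟩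
  · rintro ⟨ts, h, rfl⟩
    obtain ⟨hlen, h⟩ := List.forall₂_iff_get.1 h
    exact .out hlen.symm fun i => h i i.isLt (hlen ▸ i.isLt)

theorem semOI_call_iff {q : Q} {σ : Γ} {ss : List (RTree Γ)} {us : List (ST Γ Δ Q)}
    {t : OT Δ} :
    SemOI rsel (.node (.call q (.node σ ss)) us) t ↔
      ∃ r ∈ rsel q σ ss, ∃ t₀, SemOI rsel (substX ss r) t₀ ∧ OISub rsel us t₀ t :=
  ⟨fun h => by cases h with | call hr h₀ hs => exact ⟨_, hr, _, h₀, hs⟩,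
    fun ⟨_, hr, _, h₀, hs⟩ => .call hr h₀ hs⟩

theorem oisub_param_iff {us : List (ST Γ Δ Q)} {i : ℕ} {t : OT Δ} :
    OISub rsel us (.node (.param i) []) t ↔ ∃ h : i < us.length, SemOI rsel us[i] t :=
  ⟨fun h => by cases h with | param h hs => exact ⟨h, hs⟩, fun ⟨h, hs⟩ => .param h hs⟩

theorem oisub_out_iff {us : List (ST Γ Δ Q)} {d : Δ} {ts : List (OT Δ)} {t : OT Δ} :
    OISub rsel us (.node (.out d) ts) t ↔
      ∃ ts', List.Forall₂ (OISub rsel us) ts ts' ∧ t = .node (.out d) ts' := by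
  constructor
  · intro h
    cases h with
    | out hlen h => exact ⟨_, List.forall₂_iff_get.2 ⟨hlen.symm, fun i _ _ => h ⟨i, _⟩⟩, rfl⟩
  · rintro ⟨ts', h, rfl⟩
    obtain ⟨hlen, h⟩ := List.forall₂_iff_get.1 h
    exact .out hlen.symm fun i => h i i.isLt (hlen ▸ i.isLt)

theorem not_oisub_param_cons {us : List (ST Γ Δ Q)} {i : ℕ} {t t' : OT Δ} {ts : List (OT Δ)} :
    ¬ OISub rsel us (.node (.param i) (t :: ts)) t' := nofun

def substParams (us : List (ST Γ Δ Q)) : ST Γ Δ Q → ST Γ Δ Q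
  | .node (.param i) _ => us.getD i (.node (.param i) [])
  | .node (.out d) ts => .node (.out d) (ts.attach.map fun x => substParams us x.1)
  | .node (.call q s) ts => .node (.call q s) (ts.attach.map fun x => substParams us x.1)
decreasing_by
  all_goals
    have := List.sizeOf_lt_of_mem x.2
    simp only [RTree.node.sizeOf_spec]
    omega

@[simp]
theorem substParams_param (us : List (ST Γ Δ Q)) (i : ℕ) (ts : List (ST Γ Δ Q)) :
    substParams us (.node (.param i) ts) = us.getD i (.node (.param i) []) := by
  rw [substParams]

@[simp]
theorem substParams_out (us : List (ST Γ Δ Q)) (d : Δ) (ts : List (ST Γ Δ Q)) :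
    substParams us (.node (.out d) ts) = .node (.out d) (ts.map (substParams us)) := by
  rw [substParams]; simp

@[simp]
theorem substParams_call (us : List (ST Γ Δ Q)) (q : Q) (s : RTree Γ) (ts : List (ST Γ Δ Q)) :
    substParams us (.node (.call q s) ts) = .node (.call q s) (ts.map (substParams us)) := by
  rw [substParams]; simp

/-- `substParams` leaves a parameter `y_i` with `i ≥ us.length` in place, whereas `OISub` gives it
no value at all; the two agree only on sentential forms without such parameters. -/
inductive ParamsBelow (k : ℕ) : ST Γ Δ Q → Prop
  | param {i : ℕ} : i < k → ParamsBelow k (.node (.param i) [])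
  | out {d : Δ} {ts : List (ST Γ Δ Q)} :
      (∀ t ∈ ts, ParamsBelow k t) → ParamsBelow k (.node (.out d) ts)
  | call {q : Q} {s : RTree Γ} {ts : List (ST Γ Δ Q)} :
      (∀ t ∈ ts, ParamsBelow k t) → ParamsBelow k (.node (.call q s) ts)

attribute [simp] ParamsBelow.param

@[simp]
theorem paramsBelow_out_iff {k : ℕ} {d : Δ} {ts : List (ST Γ Δ Q)} :
    ParamsBelow k (.node (.out d) ts) ↔ ∀ t ∈ ts, ParamsBelow k t :=
  ⟨fun h => by cases h with | out h => exact h, .out⟩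

@[simp]
theorem paramsBelow_call_iff {k : ℕ} {q : Q} {s : RTree Γ} {ts : List (ST Γ Δ Q)} :
    ParamsBelow k (.node (.call q s) ts) ↔ ∀ t ∈ ts, ParamsBelow k t :=
  ⟨fun h => by cases h with | call h => exact h, .call⟩

theorem exists_forall₂_comp_oisub_iff {α : Type} {R : α → OT Δ → Prop} {ws : List (ST Γ Δ Q)}
    {d : Δ} {ts : List α} {t : OT Δ} :
    (∃ ts', List.Forall₂ (Relation.Comp R (OISub rsel ws)) ts ts' ∧ t = .node (.out d) ts') ↔
      ∃ t₁, (∃ ts₁, List.Forall₂ R ts ts₁ ∧ t₁ = .node (.out d) ts₁) ∧ OISub rsel ws t₁ t := by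
  simp only [List.forall₂_comp_iff]
  constructor
  · rintro ⟨ts', ⟨ts₁, h₁, h₂⟩, rfl⟩
    exact ⟨_, ⟨ts₁, h₁, rfl⟩, oisub_out_iff.2 ⟨ts', h₂, rfl⟩⟩
  · rintro ⟨_, ⟨ts₁, h₁, rfl⟩, h₂⟩
    obtain ⟨ts', h₃, rfl⟩ := oisub_out_iff.1 h₂
    exact ⟨ts', ⟨ts₁, h₁, h₃⟩, rfl⟩

/-- OI substitution is associative. -/
theorem oisub_map_iff {us ws : List (ST Γ Δ Q)} {f : ST Γ Δ Q → ST Γ Δ Q}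
    (hf : ∀ u ∈ us, ∀ t, SemOI rsel (f u) t ↔ ∃ x, SemOI rsel u x ∧ OISub rsel ws x t)
    (t₀ t : OT Δ) :
    OISub rsel (us.map f) t₀ t ↔ ∃ t₁, OISub rsel us t₀ t₁ ∧ OISub rsel ws t₁ t := by
  induction t₀ using RTree.induction generalizing t with
  | node a ts ih =>
    match a, ts with
    | .param i, [] =>
      simp only [oisub_param_iff, List.length_map, List.getElem_map]
      constructor
      · rintro ⟨hi, h⟩
        obtain ⟨x, hx, hxt⟩ := (hf _ (List.getElem_mem hi) t).1 h
        exact ⟨x, ⟨hi, hx⟩, hxt⟩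
      · rintro ⟨x, ⟨hi, hx⟩, hxt⟩
        exact ⟨hi, (hf _ (List.getElem_mem hi) t).2 ⟨x, hx, hxt⟩⟩
    | .param i, _ :: _ => simp [not_oisub_param_cons]
    | .out d, ts =>
      have hts : ∀ ts', List.Forall₂ (OISub rsel (us.map f)) ts ts' ↔
          List.Forall₂ (Relation.Comp (OISub rsel us) (OISub rsel ws)) ts ts' :=
        fun _ => List.forall₂_congr_left fun a ha b => ih a ha b
      simp only [oisub_out_iff, hts, exists_forall₂_comp_oisub_iff]

theorem semOI_substParams {ws : List (ST Γ Δ Q)} {u : ST Γ Δ Q}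
    (hu : ParamsBelow ws.length u) {t : OT Δ} :
    SemOI rsel (substParams ws u) t ↔ ∃ t₀, SemOI rsel u t₀ ∧ OISub rsel ws t₀ t := by
  induction hu generalizing t with
  | @param i hi =>
    simp [semOI_param_iff, oisub_param_iff, hi]
  | @out d ts _ ih =>
    have hts : ∀ ts', List.Forall₂ (SemOI rsel) (ts.map (substParams ws)) ts' ↔
        List.Forall₂ (Relation.Comp (SemOI rsel) (OISub rsel ws)) ts ts' := fun _ => by
      rw [List.forall₂_map_left_iff]
      exact List.forall₂_congr_left fun a ha b => ih a ha
    simp only [substParams_out, semOI_out_iff, hts, exists_forall₂_comp_oisub_iff]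
  | @call q s ts _ ih =>
    obtain ⟨σ, ss⟩ := s
    simp only [substParams_call, semOI_call_iff, oisub_map_iff (fun u hu t => ih u hu)]
    constructor
    · rintro ⟨r, hr, t₀, h₀, t₁, h₁, h₂⟩
      exact ⟨t₁, ⟨r, hr, t₀, h₀, h₁⟩, h₂⟩
    · rintro ⟨t₁, ⟨r, hr, t₀, h₀, h₁⟩, h₂⟩
      exact ⟨r, hr, t₀, h₀, t₁, h₁, h₂⟩

theorem semOI_call_iff_substParams {q : Q} {σ : Γ} {ss : List (RTree Γ)}
    {us : List (ST Γ Δ Q)} (h : ∀ r ∈ rsel q σ ss, ParamsBelow us.length (substX ss r))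
    {t : OT Δ} :
    SemOI rsel (.node (.call q (.node σ ss)) us) t ↔
      ∃ r ∈ rsel q σ ss, SemOI rsel (substParams us (substX ss r)) t := by
  rw [semOI_call_iff]
  exact exists_congr fun r => and_congr_right fun hr => (semOI_substParams (h r hr)).symm

@[simp]
theorem embed_node {d : Δ} {ts : List (RTree Δ)} :
    embed (.node d ts) = .node (.out d) (ts.map embed) :=
  RTree.map_node _ _ _

end OISemantics

section Reduction

open Set Function

local notation "Msat" => plainSel rulesSat

variable {uv ut uf : ST GS DS QS} {St Sf : Set (OT DS)}

theorem exists_mem_rulesSat_q0_a {ss : List (RTree GS)} {P : Rhs DS QS → Prop} :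
    (∃ r ∈ Msat .q0 .a ss, P r) ↔ ∃ pos : Bool, P (q0Rule pos) :=
  ⟨fun ⟨_, ⟨pos, hr⟩, h⟩ => ⟨pos, hr ▸ h⟩, fun ⟨pos, h⟩ => ⟨_, ⟨pos, rfl⟩, h⟩⟩

theorem exists_mem_rulesSat_q_b {ss : List (RTree GS)} {P : Rhs DS QS → Prop} :
    (∃ r ∈ Msat .q .b ss, P r) ↔ ∃ pos : Bool, P (qbRule pos) :=
  ⟨fun ⟨_, ⟨pos, hr⟩, h⟩ => ⟨pos, hr ▸ h⟩, fun ⟨pos, h⟩ => ⟨_, ⟨pos, rfl⟩, h⟩⟩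

theorem exists_mem_rulesSat_q_c {ss : List (RTree GS)} {P : Rhs DS QS → Prop} :
    (∃ r ∈ Msat .q .c ss, P r) ↔
      ∃ b₁ b₂ b₃ : Bool, (b₁ || b₂ || b₃) = true ∧ P (qcRule b₁ b₂ b₃) :=
  ⟨fun ⟨_, ⟨b₁, b₂, b₃, hb, hr⟩, h⟩ => ⟨b₁, b₂, b₃, hb, hr ▸ h⟩,
    fun ⟨b₁, b₂, b₃, hb, h⟩ => ⟨_, ⟨b₁, b₂, b₃, hb, rfl⟩, h⟩⟩

theorem exists_mem_rulesSat_q_d {ss : List (RTree GS)} {P : Rhs DS QS → Prop} :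
    (∃ r ∈ Msat .q .d ss, P r) ↔
      ∃ b₁ b₂ b₃ : Bool, (b₁ || b₂ || b₃) = true ∧ P (qdRule b₁ b₂ b₃) :=
  ⟨fun ⟨_, ⟨b₁, b₂, b₃, hb, hr⟩, h⟩ => ⟨b₁, b₂, b₃, hb, hr ▸ h⟩,
    fun ⟨b₁, b₂, b₃, hb, h⟩ => ⟨_, ⟨b₁, b₂, b₃, hb, rfl⟩, h⟩⟩

def signed (b : Bool) (u : ST GS DS QS) : ST GS DS QS := cond b u (.node (.out .not) [u])

theorem paramsBelow_map_ytf (ss : List (RTree GS)) (b : Bool) :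
    ParamsBelow 3 ((ytf b).map (RLab.subst ss)) := by
  cases b <;> simp [ytf, yS, RLab.subst]

theorem substParams_map_ytf (ss : List (RTree GS)) (b : Bool) :
    substParams [uv, ut, uf] ((ytf b).map (RLab.subst ss)) = cond b ut uf := by
  cases b <;> simp [ytf, yS, RLab.subst]

theorem substParams_substX_q0Rule (s : RTree GS) (pos : Bool) :
    substParams [] (substX [s] (q0Rule pos)) =
      .node (.call .q s) [.node (.out .v) [.node (.out .e) []], signed pos (.node (.out .e) []),
        signed (!pos) (.node (.out .e) [])] := by
  cases pos <;> simp [substX, q0Rule, RLab.subst, oeS, signed]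

theorem substParams_substX_qbRule (s : RTree GS) (pos : Bool) :
    substParams [uv, ut, uf] (substX [s, .node .d [], .node .d []] (qbRule pos)) =
      .node (.call .q s) [.node (.out .v) [uv], .node (.call .qc (.node .d [])) [ut, signed pos uv],
        .node (.call .qc (.node .d [])) [uf, signed (!pos) uv]] := by
  cases pos <;> simp [substX, qbRule, RLab.subst, yS, signed]

theorem substParams_substX_qcRule (s : RTree GS) (b₁ b₂ b₃ : Bool) :
    substParams [uv, ut, uf] (substX [s] (qcRule b₁ b₂ b₃)) =
      .node (.out .and) [.node (.out .or) [cond b₁ ut uf, cond b₂ ut uf, cond b₃ ut uf],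
        .node (.call .q s) [uv, ut, uf]] := by
  simp [substX, qcRule, RLab.subst, substParams_map_ytf, yS]

theorem substParams_substX_qdRule (ss : List (RTree GS)) (b₁ b₂ b₃ : Bool) :
    substParams [uv, ut, uf] (substX ss (qdRule b₁ b₂ b₃)) =
      .node (.out .or) [cond b₁ ut uf, cond b₂ ut uf, cond b₃ ut uf] := by
  simp [substX, qdRule, RLab.subst, substParams_map_ytf]

theorem semOI_e_iff (t : OT DS) :
    SemOI Msat (.node (.out .e) [] : ST GS DS QS) t ↔ t = embed (varE 0) := by
  simp [semOI_out_iff, varE]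

theorem semOI_v_iff {i : ℕ} (hv : ∀ t, SemOI Msat uv t ↔ t = embed (varE i))
    (t : OT DS) :
    SemOI Msat (.node (.out .v) [uv]) t ↔ t = embed (varE (i + 1)) := by
  simp [semOI_out_iff, List.forall₂_cons_left_iff, hv, varE]

theorem semOI_signed_iff {i : ℕ} (hv : ∀ t, SemOI Msat uv t ↔ t = embed (varE i))
    (b : Bool) (t : OT DS) :
    SemOI Msat (signed b uv) t ↔ t = embed (litE (b, i)) := by
  cases b <;> simp [signed, semOI_out_iff, List.forall₂_cons_left_iff, hv, litE]

theorem semOI_qc_d {u₁ u₂ : ST GS DS QS} {t : OT DS} :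
    SemOI Msat (.node (.call .qc (.node .d [])) [u₁, u₂]) t ↔
      SemOI Msat u₁ t ∨ SemOI Msat u₂ t := by
  rw [semOI_call_iff_substParams (by simp [plainSel, rulesSat, substX, RLab.subst])]
  simp [plainSel, rulesSat, substX, RLab.subst]

theorem semOI_or_iff (hT : ∀ t, SemOI Msat ut t ↔ t ∈ St) (hF : ∀ t, SemOI Msat uf t ↔ t ∈ Sf)
    (b₁ b₂ b₃ : Bool) (t : OT DS) :
    SemOI Msat (.node (.out .or) [cond b₁ ut uf, cond b₂ ut uf, cond b₃ ut uf]) t ↔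
      ∃ t₁ t₂ t₃, t₁ ∈ cond b₁ St Sf ∧ t₂ ∈ cond b₂ St Sf ∧ t₃ ∈ cond b₃ St Sf ∧
        t = .node (.out .or) [t₁, t₂, t₃] := by
  have hcond : ∀ b t, SemOI Msat (cond b ut uf) t ↔ t ∈ cond b St Sf := by
    intro b t; cases b <;> simp [hT, hF]
  simp [semOI_out_iff, List.forall₂_cons_left_iff, hcond, and_assoc]

theorem semOI_and_iff {u₁ u₂ : ST GS DS QS} {t : OT DS} :
    SemOI Msat (.node (.out .and) [u₁, u₂]) t ↔
      ∃ t₁ t₂, SemOI Msat u₁ t₁ ∧ SemOI Msat u₂ t₂ ∧ t = .node (.out .and) [t₁, t₂] := by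
  simp [semOI_out_iff, List.forall₂_cons_left_iff, and_assoc]

def ClauseOver (St Sf : Set (OT DS)) (t : OT DS) : Prop :=
  ∃ b₁ b₂ b₃ : Bool, (b₁ || b₂ || b₃) = true ∧ ∃ t₁ t₂ t₃,
    t₁ ∈ cond b₁ St Sf ∧ t₂ ∈ cond b₂ St Sf ∧ t₃ ∈ cond b₃ St Sf ∧
      t = .node (.out .or) [t₁, t₂, t₃]

/-- Indexed by the number of clauses minus one. -/
def ConjOver (St Sf : Set (OT DS)) : ℕ → OT DS → Prop
  | 0, t => ClauseOver St Sf t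
  | k + 1, t => ∃ c r, ClauseOver St Sf c ∧ ConjOver St Sf k r ∧ t = .node (.out .and) [c, r]

theorem semOI_q_d (hT : ∀ t, SemOI Msat ut t ↔ t ∈ St) (hF : ∀ t, SemOI Msat uf t ↔ t ∈ Sf)
    (t : OT DS) :
    SemOI Msat (.node (.call .q (.node .d [])) [uv, ut, uf]) t ↔ ClauseOver St Sf t := by
  rw [semOI_call_iff_substParams (by
    rintro _ ⟨b₁, b₂, b₃, -, rfl⟩
    simp [qdRule, substX, RLab.subst, paramsBelow_map_ytf]), exists_mem_rulesSat_q_d]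
  simp only [substParams_substX_qdRule, semOI_or_iff hT hF, ClauseOver]

theorem semOI_q_cIter (hT : ∀ t, SemOI Msat ut t ↔ t ∈ St) (hF : ∀ t, SemOI Msat uf t ↔ t ∈ Sf)
    (k : ℕ) (t : OT DS) :
    SemOI Msat (.node (.call .q (cIter k)) [uv, ut, uf]) t ↔ ConjOver St Sf k t := by
  induction k generalizing t with
  | zero => exact semOI_q_d hT hF t
  | succ k ih =>
    rw [cIter, semOI_call_iff_substParams (by
      rintro _ ⟨b₁, b₂, b₃, -, rfl⟩
      simp [qcRule, substX, RLab.subst, paramsBelow_map_ytf, yS]), exists_mem_rulesSat_q_c]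
    simp only [substParams_substX_qcRule, semOI_and_iff, semOI_or_iff hT hF, ih, ConjOver,
      ClauseOver]
    constructor
    · rintro ⟨b₁, b₂, b₃, hb, _, r, ⟨t₁, t₂, t₃, h₁, h₂, h₃, rfl⟩, hr, rfl⟩
      exact ⟨_, r, ⟨b₁, b₂, b₃, hb, t₁, t₂, t₃, h₁, h₂, h₃, rfl⟩, hr, rfl⟩
    · rintro ⟨_, r, ⟨b₁, b₂, b₃, hb, t₁, t₂, t₃, h₁, h₂, h₃, rfl⟩, hr, rfl⟩
      exact ⟨b₁, b₂, b₃, hb, _, r, ⟨t₁, t₂, t₃, h₁, h₂, h₃, rfl⟩, hr, rfl⟩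

def litsOf (β : ℕ → Bool) (s : Set ℕ) : Set (OT DS) := (fun j => embed (litE (β j, j))) '' s

theorem insert_union_litsOf {i e : ℕ} (h : i < e) (β : ℕ → Bool) (b : Bool) (S : Set (OT DS)) :
    insert (embed (litE (b, i))) S ∪ litsOf β (Ico (i + 1) e) =
      S ∪ litsOf (update β i b) (Ico i e) := by
  have hβ : ∀ j ∈ Ico (i + 1) e, embed (litE (update β i b j, j)) = embed (litE (β j, j)) :=
    fun j hj => by rw [update_of_ne (by grind)]
  rw [← insert_Ico_add_one_left_eq_Ico h, litsOf, litsOf, image_insert_eq, update_self,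
    image_congr hβ, insert_union, union_insert]

/-- Choosing the polarity of `p_i` and an assignment of the later variables is choosing an
assignment of `p_i` and the later variables. -/
theorem exists_exists_insert_litsOf_iff {i e : ℕ} (h : i < e)
    {P : Set (OT DS) → Set (OT DS) → Prop} :
    (∃ (pos : Bool) (γ : ℕ → Bool),
      P (insert (embed (litE (pos, i))) St ∪ litsOf γ (Ico (i + 1) e))
        (insert (embed (litE (!pos, i))) Sf ∪ litsOf (fun j => !γ j) (Ico (i + 1) e))) ↔
    ∃ γ : ℕ → Bool, P (St ∪ litsOf γ (Ico i e)) (Sf ∪ litsOf (fun j => !γ j) (Ico i e)) := by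
  have hnot : ∀ (γ : ℕ → Bool) pos,
      update (fun j => !γ j) i (!pos) = fun j => !update γ i pos j :=
    fun γ pos => funext fun j => (apply_update (fun _ => not) γ i pos j).symm
  simp only [insert_union_litsOf h, hnot]
  constructor
  · rintro ⟨pos, γ, hP⟩
    exact ⟨_, hP⟩
  · rintro ⟨γ, hP⟩
    exact ⟨γ i, γ, by rwa [update_eq_self]⟩

theorem semOI_q_bIter (m k : ℕ) {i : ℕ}
    (hv : ∀ t, SemOI Msat uv t ↔ t = embed (varE i))
    (hT : ∀ t, SemOI Msat ut t ↔ t ∈ St)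
    (hF : ∀ t, SemOI Msat uf t ↔ t ∈ Sf) (t : OT DS) :
    SemOI Msat (.node (.call .q (bIter k (cIter m))) [uv, ut, uf]) t ↔
      ∃ γ : ℕ → Bool,
        ConjOver (St ∪ litsOf γ (Ico i (i + k))) (Sf ∪ litsOf (fun j => !γ j) (Ico i (i + k)))
          m t := by
  induction k generalizing i uv ut uf St Sf with
  | zero => simp [bIter, semOI_q_cIter hT hF, litsOf]
  | succ k ih =>
    have hT' : ∀ (pos : Bool) t, SemOI Msat
        (.node (.call .qc (.node .d [])) [ut, signed pos uv]) t ↔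
          t ∈ insert (embed (litE (pos, i))) St := fun pos t => by
      rw [semOI_qc_d, hT, semOI_signed_iff hv, mem_insert_iff, or_comm]
    have hF' : ∀ (pos : Bool) t, SemOI Msat
        (.node (.call .qc (.node .d [])) [uf, signed (!pos) uv]) t ↔
          t ∈ insert (embed (litE (!pos, i))) Sf := fun pos t => by
      rw [semOI_qc_d, hF, semOI_signed_iff hv, mem_insert_iff, or_comm]
    rw [bIter, semOI_call_iff_substParams (by
      rintro _ ⟨pos, rfl⟩
      cases pos <;> simp [qbRule, substX, RLab.subst, yS])]
    simp only [exists_mem_rulesSat_q_b, substParams_substX_qbRule,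
      ih (semOI_v_iff hv) (hT' _) (hF' _), show i + 1 + k = i + (k + 1) by omega]
    exact exists_exists_insert_litsOf_iff (P := fun St Sf => ConjOver St Sf m t) (by omega)

theorem semOI_q0_sNM {n : ℕ} (hn : 1 ≤ n) (m : ℕ) (t : OT DS) :
    SemOI Msat (.node (.call .q0 (sNM n m)) []) t ↔
      ∃ γ : ℕ → Bool,
        ConjOver (litsOf γ (Ico 0 n)) (litsOf (fun j => !γ j) (Ico 0 n)) (m - 1) t := by
  have hlit : ∀ (b : Bool) t, SemOI Msat (signed b (.node (.out .e) [])) t ↔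
      t ∈ insert (embed (litE (b, 0))) ∅ := fun b t => by
    rw [semOI_signed_iff semOI_e_iff, mem_insert_iff]; simp
  rw [sNM, semOI_call_iff_substParams (by
    rintro _ ⟨pos, rfl⟩
    cases pos <;> simp [q0Rule, substX, RLab.subst, oeS])]
  simp only [exists_mem_rulesSat_q0_a, substParams_substX_q0Rule,
    semOI_q_bIter _ _ (semOI_v_iff semOI_e_iff) (hlit _) (hlit _),
    show 1 + (n - 1) = n by omega]
  rw [exists_exists_insert_litsOf_iff (P := fun St Sf => ConjOver St Sf (m - 1) t) hn]
  simp only [empty_union]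

theorem embed_varE_inj {i j : ℕ} : embed (varE i) = embed (varE j) ↔ i = j := by
  induction i generalizing j with
  | zero => cases j <;> simp [varE]
  | succ i ih => cases j <;> simp [varE, ih]

theorem embed_litE_inj {l l' : Lit} : embed (litE l) = embed (litE l') ↔ l = l' := by
  obtain ⟨_ | _, i⟩ := l <;> obtain ⟨_ | _, j⟩ := l' <;>
    cases i <;> cases j <;> simp [litE, varE, embed_varE_inj]

theorem mem_litsOf_iff {β : ℕ → Bool} {s : Set ℕ} {l : Lit} :
    embed (litE l) ∈ litsOf β s ↔ l.2 ∈ s ∧ β l.2 = l.1 := by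
  simp only [litsOf, mem_image, embed_litE_inj, Prod.ext_iff]
  constructor
  · rintro ⟨j, hj, hβ, rfl⟩
    exact ⟨hj, hβ⟩
  · rintro ⟨hl, hβ⟩
    exact ⟨l.2, hl, hβ, rfl⟩

theorem mem_cond_litsOf_iff {γ : ℕ → Bool} {n : ℕ} {l : Lit} (hl : l.2 < n) (b : Bool) :
    embed (litE l) ∈ cond b (litsOf γ (Ico 0 n)) (litsOf (fun j => !γ j) (Ico 0 n)) ↔
      (evalLit γ l ↔ b = true) := by
  cases b <;> simp [mem_litsOf_iff, hl, evalLit, Bool.eq_not]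

theorem clauseOver_clauseE_iff {γ : ℕ → Bool} {n : ℕ} {cl : Clause}
    (hcl : cl.1.2 < n ∧ cl.2.1.2 < n ∧ cl.2.2.2 < n) :
    ClauseOver (litsOf γ (Ico 0 n)) (litsOf (fun j => !γ j) (Ico 0 n)) (embed (clauseE cl)) ↔
      evalLit γ cl.1 ∨ evalLit γ cl.2.1 ∨ evalLit γ cl.2.2 := by
  obtain ⟨l₁, l₂, l₃⟩ := cl
  obtain ⟨h₁, h₂, h₃⟩ := hcl
  simp only [ClauseOver, clauseE, embed_node, List.map_cons, List.map_nil, RTree.node.injEq,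
    List.cons.injEq, and_true, true_and]
  constructor
  · rintro ⟨b₁, b₂, b₃, hb, _, _, _, m₁, m₂, m₃, rfl, rfl, rfl⟩
    rw [mem_cond_litsOf_iff h₁] at m₁
    rw [mem_cond_litsOf_iff h₂] at m₂
    rw [mem_cond_litsOf_iff h₃] at m₃
    simp only [Bool.or_eq_true] at hb
    tauto
  · intro h
    refine ⟨γ l₁.2 == l₁.1, γ l₂.2 == l₂.1, γ l₃.2 == l₃.1, by simpa [evalLit, or_assoc] using h,
      _, _, _, ?_, ?_, ?_, rfl, rfl, rfl⟩ <;> simp [mem_cond_litsOf_iff, h₁, h₂, h₃, evalLit]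

theorem conjOver_encF_iff {γ : ℕ → Bool} {n : ℕ} {φ : CNF} (hφ : φ ≠ [])
    (hvars : ∀ cl ∈ φ, cl.1.2 < n ∧ cl.2.1.2 < n ∧ cl.2.2.2 < n) :
    ConjOver (litsOf γ (Ico 0 n)) (litsOf (fun j => !γ j) (Ico 0 n)) (φ.length - 1)
        (embed (encF φ)) ↔
      ∀ cl ∈ φ, evalLit γ cl.1 ∨ evalLit γ cl.2.1 ∨ evalLit γ cl.2.2 := by
  induction φ with
  | nil => exact absurd rfl hφ
  | cons cl φ ih =>
    simp only [List.forall_mem_cons] at hvars ⊢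
    rcases φ with _ | ⟨cl', φ⟩
    · simp [encF, ConjOver, clauseOver_clauseE_iff hvars.1]
    · simp only [List.length_cons, Nat.add_sub_cancel, encF, embed_node, List.map_cons,
        List.map_nil, ConjOver]
      rw [← clauseOver_clauseE_iff hvars.1, ← ih (List.cons_ne_nil _ _) hvars.2]
      simp

theorem wf_sNM (n m : ℕ) : (sNM n m).Wf rkGS := by
  have hc : ∀ k, (cIter k).Wf rkGS := fun k => by induction k <;> simp [cIter, rkGS, *]
  have hb : ∀ k, (bIter k (cIter (m - 1))).Wf rkGS := fun k => by
    induction k <;> simp [bIter, rkGS, *]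
  simp [sNM, rkGS, hb]

theorem wf_encF (φ : CNF) : (encF φ).Wf rkDS := by
  have hv : ∀ i, (varE i).Wf rkDS := fun i => by induction i <;> simp [varE, rkDS, *]
  have hl : ∀ l, (litE l).Wf rkDS := fun ⟨b, i⟩ => by cases b <;> simp [litE, rkDS, hv]
  have hc : ∀ cl, (clauseE cl).Wf rkDS := fun ⟨l₁, l₂, l₃⟩ => by simp [clauseE, rkDS, hl]
  induction φ with
  | nil => simp [encF, rkDS]
  | cons cl φ ih => rcases φ with _ | ⟨cl', φ⟩ <;> simp [encF, rkDS, hc, ih]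

end Reduction

/-- For every 3-CNF formula `φ` over the variables `p_0,…,p_{n−1}`
with exactly `m` clauses (`n, m ≥ 1`), the pair `(s_{n,m}, enc(φ))` belongs to
`τ_{OI,M_sat}` if and only if `φ` is satisfiable. -/
theorem translation_membership_Msat_iff_sat (n m : ℕ) (hn : 1 ≤ n) (hm : 1 ≤ m)
    (φ : CNF) (hφ : goodCNF n m φ) :
    (sNM n m, encF φ) ∈ tauOI rkGS rkDS (plainSel rulesSat) QS.q0 ↔ Satisfiable φ := by
  obtain ⟨rfl, hvars⟩ := hφ
  have hne : φ ≠ [] := List.ne_nil_of_length_pos hm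
  simp only [tauOI, Set.mem_ofPred_eq, wf_sNM, wf_encF, true_and, semOI_q0_sNM hn]
  exact exists_congr fun γ => conjOver_encF_iff hne hvars

end MttF
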